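/- arXiv:1307.6944 — 6 statements merged into one kernel-verified Lean document; each statement's English description precedes it below -/
import Mathlib

section
/- If a hypergraph H is 2-intersecting (any two edges meet in at least 2 vertices) and any three edges of H have nonempty common intersection, then H has a vertex coloring with at most 4 colors such that every edge e receives at least min(|e|, 3) distinct colors. -/
private lemma three_le_image_card {α β : Type*} [DecidableEq β] {s : Finset α}
    {c : α → β} {a b d : α} (ha : a ∈ s) (hb : b ∈ s) (hd : d ∈ s)
    (h1 : c a ≠ c b) (h2 : c a ≠ c d) (h3 : c b ≠ c d) :
    3 ≤ (s.image c).card := by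
  have hsub : ({c a, c b, c d} : Finset β) ⊆ s.image c := by
    intro z hz
    simp only [Finset.mem_insert, Finset.mem_singleton] at hz
    rcases hz with rfl | rfl | rfl
    · exact Finset.mem_image_of_mem c ha
    · exact Finset.mem_image_of_mem c hb
    · exact Finset.mem_image_of_mem c hd
  have hcard : ({c a, c b, c d} : Finset β).card = 3 := by
    rw [Finset.card_insert_of_notMem (by simp [h1, h2]),
        Finset.card_insert_of_notMem (by simp [h3]), Finset.card_singleton]
  calc (3 : ℕ) = ({c a, c b, c d} : Finset β).card := hcard.symm
    _ ≤ (s.image c).card := Finset.card_le_card hsub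

theorem two_intersecting_triplewise_has_3strong_4coloring
    {V : Type*} [DecidableEq V] (H : Set (Finset V))
    (hint : ∀ e ∈ H, ∀ f ∈ H, 2 ≤ (e ∩ f).card)
    (htriple : ∀ e ∈ H, ∀ f ∈ H, ∀ g ∈ H, (e ∩ f ∩ g).Nonempty) :
    ∃ c : V → Fin 4, ∀ e ∈ H, min e.card 3 ≤ (e.image c).card := by
  rcases Set.eq_empty_or_nonempty H with hHe | hH
  · exact ⟨fun _ => 0, fun e he => by rw [hHe] at he; exact absurd he (Set.notMem_empty e)⟩
  have hcard2 : ∀ e ∈ H, 2 ≤ e.card := fun e he => by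
    simpa using hint e he e he
  -- a minimum-cardinality edge A
  obtain ⟨A, hA, hAmin⟩ : ∃ A ∈ H, ∀ e ∈ H, A.card ≤ e.card := by
    have hne : (Finset.card '' H).Nonempty := hH.image _
    obtain ⟨A, hA, hAn⟩ := Nat.sInf_mem hne
    exact ⟨A, hA, fun e he => by rw [hAn]; exact Nat.sInf_le ⟨e, he, rfl⟩⟩
  by_cases hall : ∀ f ∈ H, A ⊆ f
  · -- every edge contains A; pick two vertices of A
    obtain ⟨x, hx, y, hy, hxy⟩ := Finset.one_lt_card.mp (hcard2 A hA)
    refine ⟨fun v => if v = x then 0 else if v = y then 1 else 2, fun e he => ?_⟩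
    set c : V → Fin 4 := fun v => if v = x then 0 else if v = y then 1 else 2 with hc
    have hxe : x ∈ e := hall e he hx
    have hye : y ∈ e := hall e he hy
    have hcx : c x = 0 := by simp [hc]
    have hcy : c y = 1 := by simp [hc, Ne.symm hxy]
    rcases le_or_gt e.card 2 with h2 | h3
    · have htwo : 2 ≤ (e.image c).card := by
        refine Finset.one_lt_card.mpr ⟨c x, Finset.mem_image_of_mem c hxe,
          c y, Finset.mem_image_of_mem c hye, ?_⟩
        rw [hcx, hcy]; decide
      exact le_trans (min_le_left _ _) (le_trans h2 htwo)
    · have hnsub : ¬ e ⊆ ({x, y} : Finset V) := by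
        intro hsub
        have := Finset.card_le_card hsub
        have hxy2 : ({x, y} : Finset V).card ≤ 2 := Finset.card_insert_le _ _ |>.trans (by simp)
        omega
      obtain ⟨z, hze, hznot⟩ := Finset.not_subset.mp hnsub
      have hzx : z ≠ x := fun h => hznot (by simp [h])
      have hzy : z ≠ y := fun h => hznot (by simp [h])
      have hcz : c z = 2 := by simp [hc, hzx, hzy]
      have h3' : 3 ≤ (e.image c).card := by
        refine three_le_image_card hxe hye hze ?_ ?_ ?_ <;>
          simp only [hcx, hcy, hcz] <;> decide
      exact le_trans (min_le_right _ _) h3'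
  · push_neg at hall
    obtain ⟨f0, hf0, hf0n⟩ := hall
    -- a minimum-cardinality trace B = g ∩ A
    obtain ⟨g, hg, hgmin⟩ : ∃ g ∈ H, ∀ f ∈ H, (g ∩ A).card ≤ (f ∩ A).card := by
      have hne : ((fun f => (f ∩ A).card) '' H).Nonempty := hH.image _
      obtain ⟨g, hg, hgn⟩ := Nat.sInf_mem hne
      exact ⟨g, hg, fun f hf => le_trans (le_of_eq hgn) (Nat.sInf_le ⟨f, hf, rfl⟩)⟩
    set B : Finset V := g ∩ A with hBdef
    have hBA : B ⊆ A := Finset.inter_subset_right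
    have hB2 : 2 ≤ B.card := hint g hg A hA
    have hf0ne : f0 ∩ A ≠ A := by
      intro h
      exact hf0n (by rw [← h]; exact Finset.inter_subset_left)
    have hf0lt : (f0 ∩ A).card < A.card :=
      Finset.card_lt_card (Finset.ssubset_iff_subset_ne.mpr ⟨Finset.inter_subset_right, hf0ne⟩)
    have hBlt : B.card < A.card := lt_of_le_of_lt (hgmin f0 hf0) hf0lt
    have hA3 : 3 ≤ A.card := by omega
    obtain ⟨x, hxB⟩ := Finset.card_pos.mp (by omega : 0 < B.card)
    have hxA : x ∈ A := hBA hxB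
    refine ⟨fun v => if v = x then 0 else if v ∈ B then 1 else if v ∈ A then 2 else 3,
      fun e he => ?_⟩
    set c : V → Fin 4 := fun v => if v = x then 0 else if v ∈ B then 1 else if v ∈ A then 2 else 3
      with hc
    have he3 : 3 ≤ e.card := le_trans hA3 (hAmin e he)
    suffices h : 3 ≤ (e.image c).card from le_trans (min_le_right _ _) h
    by_cases heA : e ⊆ A
    · have heq : e = A := Finset.eq_of_subset_of_card_le heA (hAmin e he)
      rw [heq]
      obtain ⟨y, hyB, hyx⟩ := Finset.exists_mem_ne hB2 x
      have hBssA : B ⊂ A := Finset.ssubset_iff_subset_ne.mpr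
        ⟨hBA, fun h => by rw [h] at hBlt; omega⟩
      obtain ⟨z, hzA, hzB⟩ := Finset.exists_of_ssubset hBssA
      have hzx : z ≠ x := fun h => hzB (h ▸ hxB)
      have hcx : c x = 0 := by simp [hc]
      have hcy : c y = 1 := by simp [hc, hyx, hyB]
      have hcz : c z = 2 := by simp [hc, hzx, hzB, hzA]
      refine three_le_image_card hxA (hBA hyB) hzA ?_ ?_ ?_ <;>
        simp only [hcx, hcy, hcz] <;> decide
    · obtain ⟨w, hwe, hwA⟩ := Finset.not_subset.mp heA
      have hwB : w ∉ B := fun h => hwA (hBA h)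
      have hwx : w ≠ x := fun h => hwA (h ▸ hxA)
      have hcw : c w = 3 := by simp [hc, hwx, hwB, hwA]
      have hT2 : 2 ≤ (e ∩ A).card := hint e he A hA
      by_cases hxe : x ∈ e
      · have hxT : x ∈ e ∩ A := Finset.mem_inter.mpr ⟨hxe, hxA⟩
        obtain ⟨u, huT, hux⟩ := Finset.exists_mem_ne hT2 x
        obtain ⟨hue, huA⟩ := Finset.mem_inter.mp huT
        have hcx : c x = 0 := by simp [hc]
        by_cases huB : u ∈ B
        · have hcu : c u = 1 := by simp [hc, hux, huB]
          refine three_le_image_card hxe hue hwe ?_ ?_ ?_ <;>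
            simp only [hcx, hcu, hcw] <;> decide
        · have hcu : c u = 2 := by simp [hc, hux, huB, huA]
          refine three_le_image_card hxe hue hwe ?_ ?_ ?_ <;>
            simp only [hcx, hcu, hcw] <;> decide
      · obtain ⟨y, hy⟩ := htriple e he A hA g hg
        simp only [Finset.mem_inter] at hy
        obtain ⟨⟨hye, hyA⟩, hyg⟩ := hy
        have hyB : y ∈ B := Finset.mem_inter.mpr ⟨hyg, hyA⟩
        have hyx : y ≠ x := fun h => hxe (h ▸ hye)
        have hcy : c y = 1 := by simp [hc, hyx, hyB]
        have hz : ∃ z ∈ e ∩ A, z ∉ B := by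
          by_contra h
          push_neg at h
          have hsub : e ∩ A ⊆ B := h
          have heqB : e ∩ A = B := Finset.eq_of_subset_of_card_le hsub (hgmin e he)
          have : x ∈ e ∩ A := heqB.symm ▸ hxB
          exact hxe (Finset.mem_inter.mp this).1
        obtain ⟨z, hzT, hzB⟩ := hz
        obtain ⟨hze, hzA⟩ := Finset.mem_inter.mp hzT
        have hzx : z ≠ x := fun h => hxe (h ▸ hze)
        have hcz : c z = 2 := by simp [hc, hzx, hzB, hzA]
        refine three_le_image_card hye hze hwe ?_ ?_ ?_ <;>
          simp only [hcy, hcz, hcw] <;> decide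
end

section
/- For every t ≥ 2 there exists a hypergraph with property P_t (namely the hypergraph of all t-element subsets of a (t+1)-element set) that admits no t-strong coloring with only t colors; every t-strong coloring of it requires at least t+1 colors. -/
theorem tsubsets_property_Pt_no_tstrong_t_coloring (t : ℕ) (ht : 2 ≤ t) :
    (∀ s : Finset (Finset (Fin (t + 1))),
        (∀ e ∈ s, e.card = t) → 2 ≤ s.card → s.card ≤ t →
        t + 1 - s.card ≤ (s.inf id).card) ∧
    (∀ c : Fin (t + 1) → Fin t, ∃ e : Finset (Fin (t + 1)),
        e.card = t ∧ (e.image c).card < min e.card t) := by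
  constructor
  · intro s hcard h2 hle
    -- complement of inf is contained in the union of complements
    have hsub : (s.inf id)ᶜ ⊆ s.biUnion (fun e => eᶜ) := by
      intro x hx
      simp only [Finset.mem_compl] at hx
      by_contra hb
      simp only [Finset.mem_biUnion, Finset.mem_compl, not_exists, not_and, not_not] at hb
      exact hx (Finset.mem_inf.mpr (fun e he => hb e he))
    have hcompl : ((s.inf id)ᶜ).card ≤ s.card := by
      calc ((s.inf id)ᶜ).card ≤ (s.biUnion (fun e => eᶜ)).card := Finset.card_le_card hsub
        _ ≤ ∑ e ∈ s, (eᶜ).card := Finset.card_biUnion_le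
        _ = ∑ e ∈ s, 1 := by
            apply Finset.sum_congr rfl
            intro e he
            rw [Finset.card_compl, hcard e he]
            simp
        _ = s.card := by simp
    have := Finset.card_compl (s.inf id)
    simp only [Fintype.card_fin] at this
    omega
  · intro c
    have hninj : ¬ Function.Injective c := by
      intro hinj
      have := Fintype.card_le_of_injective c hinj
      simp only [Fintype.card_fin] at this
      omega
    simp only [Function.Injective, not_forall] at hninj
    obtain ⟨i, j, hcij, hij⟩ := hninj
    -- pick k distinct from i and j
    have : ∃ k : Fin (t + 1), k ≠ i ∧ k ≠ j := by
      by_contra hb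
      push_neg at hb
      have hsub : (Finset.univ : Finset (Fin (t + 1))) ⊆ {i, j} := by
        intro k _
        rcases eq_or_ne k i with h | h
        · simp [h]
        · simp [hb k h]
      have h2 : ({i, j} : Finset (Fin (t + 1))).card ≤ 2 := Finset.card_insert_le _ _ |>.trans (by simp)
      have h3 := (Finset.card_le_card hsub).trans h2
      simp only [Finset.card_univ, Fintype.card_fin] at h3
      omega
    obtain ⟨k, hki, hkj⟩ := this
    refine ⟨{k}ᶜ, ?_, ?_⟩
    · rw [Finset.card_compl]; simp
    · have hcardE : ({k}ᶜ : Finset (Fin (t + 1))).card = t := by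
        rw [Finset.card_compl]; simp
      have hjmem : j ∈ ({k}ᶜ : Finset (Fin (t + 1))) := by simp [hkj.symm, Ne.symm hkj]
      have himem : i ∈ ({k}ᶜ : Finset (Fin (t + 1))) := by simp [Ne.symm hki]
      have heq : ({k}ᶜ : Finset (Fin (t + 1))).image c = (({k}ᶜ : Finset (Fin (t + 1))).erase j).image c := by
        apply Finset.Subset.antisymm
        · intro y hy
          simp only [Finset.mem_image] at hy ⊢
          obtain ⟨x, hx, hxy⟩ := hy
          rcases eq_or_ne x j with rfl | hxj
          · exact ⟨i, Finset.mem_erase.mpr ⟨hij, himem⟩, by rw [hcij]; exact hxy⟩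
          · exact ⟨x, Finset.mem_erase.mpr ⟨hxj, hx⟩, hxy⟩
        · exact Finset.image_subset_image (Finset.erase_subset _ _)
      rw [heq, hcardE, min_self]
      calc ((({k}ᶜ : Finset (Fin (t + 1))).erase j).image c).card
          ≤ (({k}ᶜ : Finset (Fin (t + 1))).erase j).card := Finset.card_image_le
        _ = t - 1 := by rw [Finset.card_erase_of_mem hjmem, hcardE]
        _ < t := by omega
end

section
/- The 2-intersecting hypergraph whose vertex set is a 6-element set and whose edges are all 4-element subsets admits no 3-strong coloring with 4 colors; hence 5 colors are necessary in general for 3-strong colorings of 2-intersecting hypergraphs. -/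
lemma aux_two_colors (c : Fin 6 → Fin 4) (e : Finset (Fin 6)) (he : e.card = 4)
    (a b : Fin 4) (h : ∀ x ∈ e, c x = a ∨ c x = b) :
    e.card = 4 ∧ (e.image c).card < min e.card 3 := by
  refine ⟨he, ?_⟩
  have hsub : e.image c ⊆ {a, b} := by
    intro y hy
    simp only [Finset.mem_image] at hy
    obtain ⟨x, hx, rfl⟩ := hy
    simpa [Finset.mem_insert] using h x hx
  have h2 : (e.image c).card ≤ 2 := by
    calc (e.image c).card ≤ ({a, b} : Finset (Fin 4)).card := Finset.card_le_card hsub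
    _ ≤ 2 := Finset.card_insert_le _ _ |>.trans (by simp)
  omega

theorem foursubsets_of_sixset_no_3strong_4coloring :
    ∀ c : Fin 6 → Fin 4, ∃ e : Finset (Fin 6),
      e.card = 4 ∧ (e.image c).card < min e.card 3 := by
  intro c
  -- first pigeonhole: two vertices share a color
  obtain ⟨i, -, j, -, hij, hcij⟩ :=
    Finset.exists_ne_map_eq_of_card_lt_of_maps_to
      (s := (Finset.univ : Finset (Fin 6))) (t := (Finset.univ : Finset (Fin 4)))
      (by simp) (fun a _ => Finset.mem_univ (c a))
  set s : Finset (Fin 6) := (Finset.univ.erase i).erase j with hs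
  have hscard : s.card = 4 := by
    rw [hs, Finset.card_erase_of_mem (Finset.mem_erase.mpr ⟨hij.symm, Finset.mem_univ j⟩), Finset.card_erase_of_mem (by simp)]
    simp
  by_cases hA : ∃ k ∈ s, c k = c i
  · obtain ⟨k, hk, hck⟩ := hA
    have hne : (s.erase k).Nonempty := by
      rw [← Finset.card_pos, Finset.card_erase_of_mem hk, hscard]; norm_num
    obtain ⟨m, hm⟩ := hne
    have hmk : m ≠ k := Finset.ne_of_mem_erase hm
    have hms : m ∈ s := Finset.mem_of_mem_erase hm
    have hki : k ≠ i := by have := Finset.mem_of_mem_erase hk; exact Finset.ne_of_mem_erase this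
    have hkj : k ≠ j := Finset.ne_of_mem_erase hk
    have hmi : m ≠ i := by have := Finset.mem_of_mem_erase hms; exact Finset.ne_of_mem_erase this
    have hmj : m ≠ j := Finset.ne_of_mem_erase hms
    refine ⟨{i, j, k, m}, aux_two_colors c _ ?_ (c i) (c m) ?_⟩
    · rw [Finset.card_insert_of_notMem (by simp [hij.symm, hki.symm, hmi.symm] <;> tauto),
        Finset.card_insert_of_notMem (by simp [hkj.symm, hmj.symm]),
        Finset.card_insert_of_notMem (by simp [hmk.symm])]
      simp
    · intro x hx
      simp only [Finset.mem_insert, Finset.mem_singleton] at hx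
      rcases hx with rfl | rfl | rfl | rfl
      · exact Or.inl rfl
      · exact Or.inl hcij.symm
      · exact Or.inl hck
      · exact Or.inr rfl
  · push_neg at hA
    -- values on s avoid c i, so they land in a 3-element set: second pigeonhole
    obtain ⟨k, hk, l, hl, hkl, hckl⟩ :=
      Finset.exists_ne_map_eq_of_card_lt_of_maps_to
        (s := s) (t := Finset.univ.erase (c i))
        (by rw [hscard, Finset.card_erase_of_mem (by simp)]; simp)
        (fun a ha => Finset.mem_erase.mpr ⟨hA a ha, Finset.mem_univ _⟩)
    have hki : k ≠ i := by have := Finset.mem_of_mem_erase hk; exact Finset.ne_of_mem_erase this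
    have hkj : k ≠ j := Finset.ne_of_mem_erase hk
    have hli : l ≠ i := by have := Finset.mem_of_mem_erase hl; exact Finset.ne_of_mem_erase this
    have hlj : l ≠ j := Finset.ne_of_mem_erase hl
    refine ⟨{i, j, k, l}, aux_two_colors c _ ?_ (c i) (c k) ?_⟩
    · rw [Finset.card_insert_of_notMem (by simp [hij.symm, hki.symm, hli.symm] <;> tauto),
        Finset.card_insert_of_notMem (by simp [hkj.symm, hlj.symm]),
        Finset.card_insert_of_notMem (by simp [hkl])]
      simp
    · intro x hx
      simp only [Finset.mem_insert, Finset.mem_singleton] at hx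
      rcases hx with rfl | rfl | rfl | rfl
      · exact Or.inl rfl
      · exact Or.inl hcij.symm
      · exact Or.inr rfl
      · exact Or.inr hckl.symm
end

section
/- For every positive integer k there exists an intersecting hypergraph (any two edges share a vertex), with all edges of size at least 3, that has no 3-strong coloring with k colors. Specifically, taking a graph G of chromatic number k+1 and extending each edge of G by one common new vertex v yields such a hypergraph. -/
theorem intersecting_no_3strong_k_coloring (k : ℕ) (hk : 0 < k) :
    ∃ (V : Type) (_ : DecidableEq V) (H : Set (Finset V)),
      (∀ e ∈ H, ∀ f ∈ H, (e ∩ f).Nonempty) ∧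
      (∀ e ∈ H, 3 ≤ e.card) ∧
      ∀ c : V → Fin k, ∃ e ∈ H, (e.image c).card < min e.card 3 := by
  refine ⟨Option (Fin (k+1)), inferInstance,
    {e | ∃ x y : Fin (k+1), x ≠ y ∧ e = {some x, some y, none}}, ?_, ?_, ?_⟩
  · rintro e ⟨x, y, hxy, rfl⟩ f ⟨a, b, hab, rfl⟩
    exact ⟨none, by simp⟩
  · rintro e ⟨x, y, hxy, rfl⟩
    rw [Finset.card_insert_of_notMem (by simp [hxy]),
      Finset.card_insert_of_notMem (by simp)]
    simp
  · intro c
    obtain ⟨x, y, hxy, hc⟩ := Fintype.exists_ne_map_eq_of_card_lt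
      (fun i : Fin (k+1) => c (some i)) (by simp)
    refine ⟨{some x, some y, none}, ⟨x, y, hxy, rfl⟩, ?_⟩
    have hcard : ({some x, some y, none} : Finset (Option (Fin (k+1)))).card = 3 := by
      rw [Finset.card_insert_of_notMem (by simp [hxy]),
        Finset.card_insert_of_notMem (by simp)]
      simp
    rw [hcard]
    have : ({some x, some y, none} : Finset (Option (Fin (k+1)))).image c
        ⊆ {c (some x), c none} := by
      intro a ha
      simp only [Finset.mem_image, Finset.mem_insert, Finset.mem_singleton] at ha ⊢
      obtain ⟨b, hb, rfl⟩ := ha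
      rcases hb with rfl | rfl | rfl
      · exact Or.inl rfl
      · exact Or.inl hc.symm
      · exact Or.inr rfl
    calc (({some x, some y, none} : Finset (Option (Fin (k+1)))).image c).card
        ≤ ({c (some x), c none} : Finset (Fin k)).card := Finset.card_le_card this
      _ ≤ 2 := Finset.card_insert_le _ _ |>.trans (by simp)
      _ < min 3 3 := by simp
end

section
/- Every intersecting hypergraph with no singleton edges has a proper vertex coloring (no monochromatic edge) using at most 3 colors. -/
theorem intersecting_proper_3coloring
    {V : Type*} [DecidableEq V] (H : Set (Finset V))
    (hsize : ∀ e ∈ H, 2 ≤ e.card)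
    (hint : ∀ e ∈ H, ∀ f ∈ H, (e ∩ f).Nonempty) :
    ∃ c : V → Fin 3, ∀ e ∈ H, ∃ x ∈ e, ∃ y ∈ e, c x ≠ c y := by
  classical
  by_cases hne : H.Nonempty
  · obtain ⟨e1, he1⟩ := hne
    have hP : ∃ n, ∃ e ∈ H, e.card = n := ⟨e1.card, e1, he1, rfl⟩
    obtain ⟨em, hem, hcardm⟩ := Nat.find_spec hP
    have hmin : ∀ f ∈ H, em.card ≤ f.card := by
      intro f hf
      rw [hcardm]
      exact Nat.find_min' hP ⟨f, hf, rfl⟩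
    have hm2 : 2 ≤ em.card := hsize em hem
    obtain ⟨a, ha⟩ : em.Nonempty := Finset.card_pos.mp (by omega)
    refine ⟨fun x => if x = a then 0 else if x ∈ em then 1 else 2, ?_⟩
    intro f hf
    by_cases haf : a ∈ f
    · obtain ⟨y, hy, hya⟩ := Finset.exists_mem_ne (hsize f hf) a
      refine ⟨a, haf, y, hy, ?_⟩
      by_cases hyem : y ∈ em <;> simp [hya, hyem]
    · obtain ⟨x, hx⟩ := hint f hf em hem
      rw [Finset.mem_inter] at hx
      have hxa : x ≠ a := fun h => haf (h ▸ hx.1)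
      -- f is not contained in em \ {a}
      have hz : ∃ z ∈ f, z ∉ em := by
        by_contra h
        push_neg at h
        have hsub : f ⊆ em.erase a := fun z hz =>
          Finset.mem_erase.mpr ⟨fun hh => haf (hh ▸ hz), h z hz⟩
        have := Finset.card_le_card hsub
        rw [Finset.card_erase_of_mem ha] at this
        have := hmin f hf
        omega
      obtain ⟨z, hzf, hzm⟩ := hz
      have hza : z ≠ a := fun h => hzm (h ▸ ha)
      refine ⟨x, hx.1, z, hzf, ?_⟩
      simp [hxa, hza, hx.2, hzm]
  · exact ⟨fun _ => 0, fun e he => absurd ⟨e, he⟩ hne⟩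
end

section
/- Let G be a 2-intersecting hypergraph whose edge set forms an antichain under inclusion, and suppose e1, e2, e3 are edges with empty common intersection chosen so that |e1 ∪ e2 ∪ e3| is minimum among all such triples. If none of e1, e2, e3 has a private vertex (a vertex in that edge but in neither of the other two), then coloring the vertices of e1 ∩ e3 with colors {1,3} using color 1 exactly once, the vertices of e1 ∩ e2 with colors {2,4} using color 2 exactly once, all vertices of e2 ∩ e3 with color 5, and all remaining vertices with color 1, yields a 3-strong coloring of G. -/
private lemma two_of {V : Type*} [DecidableEq V] {c : V → Fin 5} {s t : Finset V} {u v : Fin 5}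
    (hs : s ⊆ t) (hcard : 2 ≤ s.card)
    (hcol : ∀ x ∈ t, c x = u ∨ c x = v)
    (huniq : ∃! x, x ∈ t ∧ c x = u) : ∃ x ∈ s, c x = v := by
  obtain ⟨x, hx, y, hy, hxy⟩ := Finset.one_lt_card.mp (lt_of_lt_of_le one_lt_two hcard)
  rcases hcol x (hs hx) with h1 | h1
  · rcases hcol y (hs hy) with h2 | h2
    · exact absurd (huniq.unique ⟨hs hx, h1⟩ ⟨hs hy, h2⟩) hxy
    · exact ⟨y, hy, h2⟩
  · exact ⟨x, hx, h1⟩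

private lemma three_colors {V : Type*} [DecidableEq V] {c : V → Fin 5} {e : Finset V} {x y z : V}
    (hx : x ∈ e) (hy : y ∈ e) (hz : z ∈ e)
    (h1 : c x ≠ c y) (h2 : c x ≠ c z) (h3 : c y ≠ c z) :
    3 ≤ (e.image c).card := by
  have hsub : ({c x, c y, c z} : Finset (Fin 5)) ⊆ e.image c := by
    intro w hw
    simp only [Finset.mem_insert, Finset.mem_singleton] at hw
    rcases hw with h | h | h <;> subst h <;> exact Finset.mem_image_of_mem c ‹_›
  have hcard : ({c x, c y, c z} : Finset (Fin 5)).card = 3 := by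
    rw [Finset.card_insert_of_notMem (by simp [h1, h2]),
        Finset.card_insert_of_notMem (by simp [h3]), Finset.card_singleton]
  calc 3 = ({c x, c y, c z} : Finset (Fin 5)).card := hcard.symm
    _ ≤ _ := Finset.card_le_card hsub

theorem case4_coloring_is_3strong
    {V : Type*} [DecidableEq V] (H : Set (Finset V))
    (hint : ∀ e ∈ H, ∀ f ∈ H, 2 ≤ (e ∩ f).card)
    (hanti : ∀ e ∈ H, ∀ f ∈ H, e ⊆ f → e = f)
    (e1 e2 e3 : Finset V) (he1 : e1 ∈ H) (he2 : e2 ∈ H) (he3 : e3 ∈ H)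
    (hempty : e1 ∩ e2 ∩ e3 = ∅)
    (hmin : ∀ f1 ∈ H, ∀ f2 ∈ H, ∀ f3 ∈ H, f1 ∩ f2 ∩ f3 = ∅ →
      (e1 ∪ e2 ∪ e3).card ≤ (f1 ∪ f2 ∪ f3).card)
    (hp1 : e1 ⊆ e2 ∪ e3) (hp2 : e2 ⊆ e1 ∪ e3) (hp3 : e3 ⊆ e1 ∪ e2)
    (c : V → Fin 5)
    (h13 : ∀ x ∈ e1 ∩ e3, c x = 0 ∨ c x = 2)
    (h13u : ∃! x, x ∈ e1 ∩ e3 ∧ c x = 0)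
    (h12 : ∀ x ∈ e1 ∩ e2, c x = 1 ∨ c x = 3)
    (h12u : ∃! x, x ∈ e1 ∩ e2 ∧ c x = 1)
    (h23 : ∀ x ∈ e2 ∩ e3, c x = 4)
    (hout : ∀ x, x ∉ e1 ∪ e2 ∪ e3 → c x = 0) :
    ∀ e ∈ H, min e.card 3 ≤ (e.image c).card := by
  intro e he
  refine le_trans (min_le_right _ _) ?_
  by_cases hA : (e ∩ (e2 ∩ e3)).Nonempty
  · by_cases hB : (e ∩ (e1 ∩ e3)).Nonempty
    · by_cases hC : (e ∩ (e1 ∩ e2)).Nonempty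
      · -- meets all three regions
        obtain ⟨x, hx⟩ := hA; obtain ⟨y, hy⟩ := hB; obtain ⟨z, hz⟩ := hC
        simp only [Finset.mem_inter] at hx hy hz
        have cx := h23 x (Finset.mem_inter.mpr ⟨hx.2.1, hx.2.2⟩)
        have cy := h13 y (Finset.mem_inter.mpr ⟨hy.2.1, hy.2.2⟩)
        have cz := h12 z (Finset.mem_inter.mpr ⟨hz.2.1, hz.2.2⟩)
        refine three_colors hx.1 hy.1 hz.1 ?_ ?_ ?_
        · rcases cy with h | h <;> rw [cx, h] <;> decide
        · rcases cz with h | h <;> rw [cx, h] <;> decide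
        · rcases cy with h | h <;> rcases cz with h' | h' <;> rw [h, h'] <;> decide
      · -- meets A and B, not C
        have hBcard : 2 ≤ (e ∩ (e1 ∩ e3)).card := by
          refine le_trans (hint e he e1 he1) (Finset.card_le_card ?_)
          intro w hw
          simp only [Finset.mem_inter] at hw ⊢
          rcases Finset.mem_union.mp (hp1 hw.2) with h | h
          · exact absurd ⟨w, Finset.mem_inter.mpr ⟨hw.1, Finset.mem_inter.mpr ⟨hw.2, h⟩⟩⟩ hC
          · exact ⟨hw.1, hw.2, h⟩
        obtain ⟨y, hy, hcy⟩ := two_of Finset.inter_subset_right hBcard h13 h13u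
        have hy' := Finset.mem_inter.mp hy
        obtain ⟨x, hx⟩ := hA
        simp only [Finset.mem_inter] at hx
        have cx := h23 x (Finset.mem_inter.mpr ⟨hx.2.1, hx.2.2⟩)
        by_cases ho : ∃ w ∈ e, w ∉ e1 ∪ e2 ∪ e3
        · obtain ⟨w, hw, hwo⟩ := ho
          have cw := hout w hwo
          refine three_colors hx.1 hy'.1 hw ?_ ?_ ?_ <;> simp only [cx, hcy, cw] <;> decide
        · push_neg at ho
          have hsub : e ⊆ e3 := by
            intro w hw
            rcases Finset.mem_union.mp (ho w hw) with h | h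
            · rcases Finset.mem_union.mp h with h' | h'
              · rcases Finset.mem_union.mp (hp1 h') with h'' | h''
                · exact absurd ⟨w, Finset.mem_inter.mpr ⟨hw, Finset.mem_inter.mpr ⟨h', h''⟩⟩⟩ hC
                · exact h''
              · rcases Finset.mem_union.mp (hp2 h') with h'' | h''
                · exact absurd ⟨w, Finset.mem_inter.mpr ⟨hw, Finset.mem_inter.mpr ⟨h'', h'⟩⟩⟩ hC
                · exact h''
            · exact h
          have heq : e = e3 := hanti e he e3 he3 hsub
          obtain ⟨w, ⟨hw13, hw0⟩, -⟩ := h13u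
          have hwE : w ∈ e := heq ▸ (Finset.mem_inter.mp hw13).2
          refine three_colors hx.1 hy'.1 hwE ?_ ?_ ?_ <;> simp only [cx, hcy, hw0] <;> decide
    · -- B empty: meets A, and C with card ≥ 2
      have hCcard : 2 ≤ (e ∩ (e1 ∩ e2)).card := by
        refine le_trans (hint e he e1 he1) (Finset.card_le_card ?_)
        intro w hw
        simp only [Finset.mem_inter] at hw ⊢
        rcases Finset.mem_union.mp (hp1 hw.2) with h | h
        · exact ⟨hw.1, hw.2, h⟩
        · exact absurd ⟨w, Finset.mem_inter.mpr ⟨hw.1, Finset.mem_inter.mpr ⟨hw.2, h⟩⟩⟩ hB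
      obtain ⟨z, hz, hcz⟩ := two_of Finset.inter_subset_right hCcard h12 h12u
      have hz' := Finset.mem_inter.mp hz
      obtain ⟨x, hx⟩ := hA
      simp only [Finset.mem_inter] at hx
      have cx := h23 x (Finset.mem_inter.mpr ⟨hx.2.1, hx.2.2⟩)
      by_cases ho : ∃ w ∈ e, w ∉ e1 ∪ e2 ∪ e3
      · obtain ⟨w, hw, hwo⟩ := ho
        have cw := hout w hwo
        refine three_colors hx.1 hz'.1 hw ?_ ?_ ?_ <;> simp only [cx, hcz, cw] <;> decide
      · push_neg at ho
        have hsub : e ⊆ e2 := by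
          intro w hw
          rcases Finset.mem_union.mp (ho w hw) with h | h
          · rcases Finset.mem_union.mp h with h' | h'
            · rcases Finset.mem_union.mp (hp1 h') with h'' | h''
              · exact h''
              · exact absurd ⟨w, Finset.mem_inter.mpr ⟨hw, Finset.mem_inter.mpr ⟨h', h''⟩⟩⟩ hB
            · exact h'
          · rcases Finset.mem_union.mp (hp3 h) with h'' | h''
            · exact absurd ⟨w, Finset.mem_inter.mpr ⟨hw, Finset.mem_inter.mpr ⟨h'', h⟩⟩⟩ hB
            · exact h''
        have heq : e = e2 := hanti e he e2 he2 hsub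
        obtain ⟨w, ⟨hw12, hw1⟩, -⟩ := h12u
        have hwE : w ∈ e := heq ▸ (Finset.mem_inter.mp hw12).2
        refine three_colors hx.1 hz'.1 hwE ?_ ?_ ?_ <;> simp only [cx, hcz, hw1] <;> decide
  · -- A empty: B and C each with card ≥ 2
    have hCcard : 2 ≤ (e ∩ (e1 ∩ e2)).card := by
      refine le_trans (hint e he e2 he2) (Finset.card_le_card ?_)
      intro w hw
      simp only [Finset.mem_inter] at hw ⊢
      rcases Finset.mem_union.mp (hp2 hw.2) with h | h
      · exact ⟨hw.1, h, hw.2⟩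
      · exact absurd ⟨w, Finset.mem_inter.mpr ⟨hw.1, Finset.mem_inter.mpr ⟨hw.2, h⟩⟩⟩ hA
    have hBcard : 2 ≤ (e ∩ (e1 ∩ e3)).card := by
      refine le_trans (hint e he e3 he3) (Finset.card_le_card ?_)
      intro w hw
      simp only [Finset.mem_inter] at hw ⊢
      rcases Finset.mem_union.mp (hp3 hw.2) with h | h
      · exact ⟨hw.1, h, hw.2⟩
      · exact absurd ⟨w, Finset.mem_inter.mpr ⟨hw.1, Finset.mem_inter.mpr ⟨h, hw.2⟩⟩⟩ hA
    obtain ⟨y, hy, hcy⟩ := two_of Finset.inter_subset_right hBcard h13 h13u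
    obtain ⟨z, hz, hcz⟩ := two_of Finset.inter_subset_right hCcard h12 h12u
    have hy' := Finset.mem_inter.mp hy
    have hz' := Finset.mem_inter.mp hz
    by_cases ho : ∃ w ∈ e, w ∉ e1 ∪ e2 ∪ e3
    · obtain ⟨w, hw, hwo⟩ := ho
      have cw := hout w hwo
      refine three_colors hy'.1 hz'.1 hw ?_ ?_ ?_ <;> simp only [hcy, hcz, cw] <;> decide
    · push_neg at ho
      have hsub : e ⊆ e1 := by
        intro w hw
        rcases Finset.mem_union.mp (ho w hw) with h | h
        · rcases Finset.mem_union.mp h with h' | h'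
          · exact h'
          · rcases Finset.mem_union.mp (hp2 h') with h'' | h''
            · exact h''
            · exact absurd ⟨w, Finset.mem_inter.mpr ⟨hw, Finset.mem_inter.mpr ⟨h', h''⟩⟩⟩ hA
        · rcases Finset.mem_union.mp (hp3 h) with h'' | h''
          · exact h''
          · exact absurd ⟨w, Finset.mem_inter.mpr ⟨hw, Finset.mem_inter.mpr ⟨h'', h⟩⟩⟩ hA
      have heq : e = e1 := hanti e he e1 he1 hsub
      obtain ⟨w, ⟨hw13, hw0⟩, -⟩ := h13u
      have hwE : w ∈ e := heq ▸ (Finset.mem_inter.mp hw13).1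
      refine three_colors hy'.1 hz'.1 hwE ?_ ?_ ?_ <;> simp only [hcy, hcz, hw0] <;> decide
end
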